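/- Let n ≥ 1, k > 0, ω_f > 0, c̃ ≥ 0, α ∈ (0,1), let h₁ ∈ ℝⁿ be nonzero with ĥ₁ := h₁/‖h₁‖, let H be a symmetric positive definite real n×n matrix, and set M := k(Iₙ − α ĥ₁ ĥ₁ᵀ). Then M is positive definite with a positive definite square root M^{1/2}, and Z := ω_f M H + ω_f c̃ h₁ h₁ᵀ satisfies M^{−1/2} Z M^{1/2} = ω_f M^{1/2} H M^{1/2} + ω_f c̃ h₁ h₁ᵀ; in particular Z is similar to a symmetric positive definite matrix. -/

import Mathlib

noncomputable section
open Matrix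

lemma myPosDef_smul {n : ℕ} {A : Matrix (Fin n) (Fin n) ℝ} {c : ℝ}
    (hA : A.PosDef) (hc : 0 < c) : (c • A).PosDef := by
  refine posDef_iff_dotProduct_mulVec.mpr ⟨?_, fun x hx => ?_⟩
  · have hsym : Aᵀ = A := by
      ext i j
      simpa [conjTranspose_apply] using congrFun (congrFun hA.1.eq i) j
    simp [Matrix.IsHermitian, conjTranspose_smul, hsym]
  · rw [smul_mulVec, dotProduct_smul, smul_eq_mul]
    exact mul_pos hc (hA.dotProduct_mulVec_pos hx)

lemma myHerm_vv {n : ℕ} (v : Fin n → ℝ) : (vecMulVec v v).IsHermitian := by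
  unfold Matrix.IsHermitian
  ext i j
  simp [conjTranspose_apply, vecMulVec_apply, mul_comm]

lemma myVV_mulVec {n : ℕ} (v : Fin n → ℝ) (x : Fin n → ℝ) :
    vecMulVec v v *ᵥ x = (v ⬝ᵥ x) • v := by
  ext i
  simp [mulVec, dotProduct, vecMulVec_apply, Finset.mul_sum, mul_assoc, mul_comm, mul_left_comm]

lemma myPSD_vv {n : ℕ} (v : Fin n → ℝ) {c : ℝ} (hc : 0 ≤ c) :
    (c • vecMulVec v v).PosSemidef := by
  refine posSemidef_iff_dotProduct_mulVec.mpr ⟨?_, fun x => ?_⟩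
  · unfold Matrix.IsHermitian
    ext i j
    simp [conjTranspose_apply, vecMulVec_apply, mul_comm]
  · rw [smul_mulVec, dotProduct_smul, myVV_mulVec, dotProduct_smul, star_trivial,
      dotProduct_comm]
    simp only [smul_eq_mul]
    exact mul_nonneg hc (mul_self_nonneg _)

lemma myPosDef_conj {n : ℕ} {H B : Matrix (Fin n) (Fin n) ℝ}
    (hH : H.PosDef) (hB : IsUnit B) : (Bᵀ * H * B).PosDef := by
  have hBt : Bᵀ = Bᴴ := by ext i j; simp [conjTranspose_apply]
  refine posDef_iff_dotProduct_mulVec.mpr ⟨by rw [hBt]; exact isHermitian_conjTranspose_mul_mul B hH.1, fun x hx => ?_⟩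
  have hBx : B *ᵥ x ≠ 0 := by
    intro h
    exact hx ((Matrix.mulVec_injective_iff_isUnit.mpr hB).eq_iff.mp (by simp [h]))
  have := hH.dotProduct_mulVec_pos hBx
  rw [hBt]
  simpa only [star_mulVec, dotProduct_mulVec, vecMul_vecMul] using this

lemma myPosDef_unit {n : ℕ} (u : Fin n → ℝ) (hu : u ⬝ᵥ u = 1) {c γ : ℝ}
    (hc : 0 < c) (hγ0 : 0 ≤ γ) (hγ1 : γ < 1) :
    (c • ((1 : Matrix (Fin n) (Fin n) ℝ) - γ • vecMulVec u u)).PosDef := by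
  refine posDef_iff_dotProduct_mulVec.mpr ⟨?_, fun x hx => ?_⟩
  · unfold Matrix.IsHermitian
    ext i j
    simp [conjTranspose_apply, vecMulVec_apply, one_apply, mul_comm]
    rcases eq_or_ne i j with h | h
    · simp [h]
    · simp [h, Ne.symm h]
  · have hxx : 0 < x ⬝ᵥ x := by
      simpa [star_trivial] using (dotProduct_star_self_pos_iff (v := x)).mpr hx
    have hcs : (u ⬝ᵥ x) * (u ⬝ᵥ x) ≤ x ⬝ᵥ x := by
      have h := Finset.sum_mul_sq_le_sq_mul_sq Finset.univ u x
      simp only [sq] at h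
      simp only [dotProduct] at hu ⊢
      rw [hu, one_mul] at h
      exact h
    rw [smul_mulVec, dotProduct_smul, sub_mulVec, one_mulVec, smul_mulVec,
      myVV_mulVec, dotProduct_sub, dotProduct_smul, dotProduct_smul, star_trivial,
      dotProduct_comm x u]
    simp only [smul_eq_mul]
    have key : 0 < x ⬝ᵥ x - γ * (u ⬝ᵥ x * (u ⬝ᵥ x)) := by
      nlinarith [mul_le_mul_of_nonneg_left hcs hγ0, mul_pos hxx hxx]
    have := mul_pos hc key
    nlinarith [this]
theorem stmt3 (n : ℕ) (hn : 1 ≤ n) (k ωf ctil α : ℝ)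
    (hk : 0 < k) (hωf : 0 < ωf) (hctil : 0 ≤ ctil) (hα : α ∈ Set.Ioo (0 : ℝ) 1)
    (h₁ : Fin n → ℝ) (hh₁ : h₁ ≠ 0)
    (H : Matrix (Fin n) (Fin n) ℝ) (hH : H.PosDef) :
    (k • ((1 : Matrix (Fin n) (Fin n) ℝ) -
        α • Matrix.vecMulVec ((Real.sqrt (h₁ ⬝ᵥ h₁))⁻¹ • h₁)
          ((Real.sqrt (h₁ ⬝ᵥ h₁))⁻¹ • h₁))).PosDef ∧
    ∃ R : Matrix (Fin n) (Fin n) ℝ, R.PosDef ∧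
      R * R = k • ((1 : Matrix (Fin n) (Fin n) ℝ) -
        α • Matrix.vecMulVec ((Real.sqrt (h₁ ⬝ᵥ h₁))⁻¹ • h₁)
          ((Real.sqrt (h₁ ⬝ᵥ h₁))⁻¹ • h₁)) ∧
      R⁻¹ * (ωf • ((k • ((1 : Matrix (Fin n) (Fin n) ℝ) -
            α • Matrix.vecMulVec ((Real.sqrt (h₁ ⬝ᵥ h₁))⁻¹ • h₁)
              ((Real.sqrt (h₁ ⬝ᵥ h₁))⁻¹ • h₁))) * H) +
          (ωf * ctil) • Matrix.vecMulVec h₁ h₁) * R =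
        ωf • (R * H * R) + (ωf * ctil) • Matrix.vecMulVec h₁ h₁ ∧
      (ωf • (R * H * R) + (ωf * ctil) • Matrix.vecMulVec h₁ h₁).PosDef := by
  obtain ⟨hα0, hα1⟩ := hα
  -- basic facts about h₁ and the unit vector u
  have hdd : 0 < h₁ ⬝ᵥ h₁ := by
    simpa [star_trivial] using (dotProduct_star_self_pos_iff (v := h₁)).mpr hh₁
  set s : ℝ := Real.sqrt (h₁ ⬝ᵥ h₁) with hs_def
  have hs : 0 < s := Real.sqrt_pos.mpr hdd
  have hss : s * s = h₁ ⬝ᵥ h₁ := Real.mul_self_sqrt hdd.le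
  set u : Fin n → ℝ := s⁻¹ • h₁ with hu_def
  set P : Matrix (Fin n) (Fin n) ℝ := Matrix.vecMulVec u u with hP_def
  have huu : u ⬝ᵥ u = 1 := by
    simp only [hu_def, smul_dotProduct, dotProduct_smul, smul_eq_mul]
    rw [← hss]
    field_simp
  have hPP : P * P = P := by
    ext i j
    simp only [hP_def, Matrix.mul_apply, vecMulVec_apply]
    have : ∀ l, u i * u l * (u l * u j) = (u i * u j) * (u l * u l) := by
      intro l; ring
    simp only [this, ← Finset.mul_sum]
    have : (∑ l, u l * u l) = 1 := huu
    rw [this, mul_one]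
  -- β and the square root R
  obtain ⟨β, hβ_def⟩ : ∃ β : ℝ, β = 1 - Real.sqrt (1 - α) := ⟨_, rfl⟩
  have hsar : Real.sqrt (1 - α) * Real.sqrt (1 - α) = 1 - α :=
    Real.mul_self_sqrt (by linarith)
  have hsar1 : Real.sqrt (1 - α) < 1 := by
    nlinarith [Real.sqrt_nonneg (1 - α), hsar]
  have hsar0 : 0 < Real.sqrt (1 - α) := Real.sqrt_pos.mpr (by linarith)
  have hβ0 : 0 ≤ β := by simp only [hβ_def]; linarith
  have hβ1 : β < 1 := by simp only [hβ_def]; linarith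
  have hβα : 2 * β - β * β = α := by simp only [hβ_def]; nlinarith [hsar]
  obtain ⟨R, hR_def⟩ : ∃ R : Matrix (Fin n) (Fin n) ℝ,
      R = Real.sqrt k • ((1 : Matrix (Fin n) (Fin n) ℝ) - β • P) := ⟨_, rfl⟩
  have hsk : 0 < Real.sqrt k := Real.sqrt_pos.mpr hk
  have hRpos : R.PosDef := by
    rw [hR_def, hP_def]
    exact myPosDef_unit u huu hsk hβ0 hβ1
  have hMpos : (k • ((1 : Matrix (Fin n) (Fin n) ℝ) - α • P)).PosDef :=
    myPosDef_unit u huu hk hα0.le hα1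
  have hRR : R * R = k • ((1 : Matrix (Fin n) (Fin n) ℝ) - α • P) := by
    have expand : ((1 : Matrix (Fin n) (Fin n) ℝ) - β • P) *
        ((1 : Matrix (Fin n) (Fin n) ℝ) - β • P)
        = (1 : Matrix (Fin n) (Fin n) ℝ) - α • P := by
      simp only [sub_mul, mul_sub, one_mul, mul_one, Matrix.smul_mul, Matrix.mul_smul, hPP,
        smul_smul]
      rw [← hβα]
      module
    rw [hR_def, Matrix.smul_mul, Matrix.mul_smul, smul_smul, Real.mul_self_sqrt hk.le, expand]
  -- commutation of R with P and with h₁h₁ᵀ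
  have hPR : P * R = R * P := by
    rw [hR_def]
    simp only [Matrix.mul_smul, Matrix.smul_mul, mul_sub, sub_mul, mul_one, one_mul,
      Matrix.mul_smul, Matrix.smul_mul, hPP]
  have hvv : Matrix.vecMulVec h₁ h₁ = (s * s) • P := by
    ext i j
    simp only [hP_def, vecMulVec_apply, Matrix.smul_apply, hu_def, Pi.smul_apply, smul_eq_mul]
    field_simp
  have hvvR : Matrix.vecMulVec h₁ h₁ * R = R * Matrix.vecMulVec h₁ h₁ := by
    rw [hvv, Matrix.smul_mul, hPR, Matrix.mul_smul]
  refine ⟨hMpos, R, hRpos, hRR, ?_, ?_⟩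
  · -- the similarity identity
    have hdet : IsUnit R.det := (Matrix.isUnit_iff_isUnit_det R).mp hRpos.isUnit
    have key : (ωf • ((k • ((1 : Matrix (Fin n) (Fin n) ℝ) - α • P)) * H) +
          (ωf * ctil) • Matrix.vecMulVec h₁ h₁) * R =
        R * (ωf • (R * H * R) + (ωf * ctil) • Matrix.vecMulVec h₁ h₁) := by
      rw [← hRR]
      simp only [Matrix.add_mul, Matrix.mul_add, Matrix.smul_mul, Matrix.mul_smul]
      rw [hvvR]
      congr 2
      rw [Matrix.mul_assoc, Matrix.mul_assoc, Matrix.mul_assoc]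
    rw [Matrix.mul_assoc, key, ← Matrix.mul_assoc, Matrix.nonsing_inv_mul R hdet, Matrix.one_mul]
  · -- positive definiteness of the conjugated matrix
    have hRsym : Rᵀ = R := by
      ext i j
      have h := congrFun (congrFun hRpos.1.eq i) j
      simp only [conjTranspose_apply, star_trivial] at h
      simpa [Matrix.transpose_apply] using h
    have h1 : (ωf • (R * H * R)).PosDef := by
      have := myPosDef_conj hH hRpos.isUnit
      rw [hRsym] at this
      exact myPosDef_smul this hωf
    exact h1.add_posSemidef (myPSD_vv h₁ (mul_nonneg hωf.le hctil))
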